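/- arXiv:1109.5287 — 5 statements merged into one kernel-verified Lean document; each statement's English description precedes it below -/
import Mathlib

section
/- Let X be a random vector in ℝⁿ with a log-concave probability density f. Then log(‖f‖^{−1/n}) ≤ h(X)/n ≤ 1 + log(‖f‖^{−1/n}); equivalently, −log ‖f‖ ≤ h(X) ≤ n − log ‖f‖. -/
open MeasureTheory ProbabilityTheory Real
open scoped Pointwise ENNReal

noncomputable def ent {n : ℕ} (f : EuclideanSpace ℝ (Fin n) → ℝ) : ℝ :=
  -∫ x, f x * Real.log (f x)

noncomputable def densSup {n : ℕ} (f : EuclideanSpace ℝ (Fin n) → ℝ) : ℝ :=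
  (essSup (fun x => ENNReal.ofReal (f x)) volume).toReal

def HasDensity {Ω : Type*} [MeasurableSpace Ω] (P : Measure Ω) {n : ℕ}
    (X : Ω → EuclideanSpace ℝ (Fin n)) (f : EuclideanSpace ℝ (Fin n) → ℝ) : Prop :=
  Measure.map X P = volume.withDensity (fun x => ENNReal.ofReal (f x))

def ConvexForm {n : ℕ} (f : EuclideanSpace ℝ (Fin n) → ℝ) (β : ℝ) : Prop :=
  ∃ (S : Set (EuclideanSpace ℝ (Fin n))) (V : EuclideanSpace ℝ (Fin n) → ℝ),
    IsOpen S ∧ Convex ℝ S ∧ ConvexOn ℝ S V ∧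
    (∀ x ∈ S, 0 < V x) ∧ (∀ x ∈ S, f x = V x ^ (-β)) ∧ (∀ x ∉ S, f x = 0)

def LogConcaveDensity {n : ℕ} (f : EuclideanSpace ℝ (Fin n) → ℝ) : Prop :=
  (∀ x, 0 ≤ f x) ∧
  ∀ x y : EuclideanSpace ℝ (Fin n), ∀ t : ℝ, 0 < t → t < 1 →
    f x ^ t * f y ^ (1 - t) ≤ f (t • x + (1 - t) • y)

def KConcave {n : ℕ} (μ : Measure (EuclideanSpace ℝ (Fin n))) (κ : ℝ) : Prop :=
  ∀ A B : Set (EuclideanSpace ℝ (Fin n)), MeasurableSet A → MeasurableSet B →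
    0 < μ A → 0 < μ B → ∀ t : ℝ, 0 < t → t < 1 →
      (t * (μ A).toReal ^ κ + (1 - t) * (μ B).toReal ^ κ) ^ (1/κ) ≤
        (μ (t • A + (1 - t) • B)).toReal

def IsConvexBody {n : ℕ} (A : Set (EuclideanSpace ℝ (Fin n))) : Prop :=
  Convex ℝ A ∧ IsCompact A ∧ (interior A).Nonempty

def IsUniformOn {Ω : Type*} [MeasurableSpace Ω] (P : Measure Ω) {n : ℕ}
    (X : Ω → EuclideanSpace ℝ (Fin n)) (A : Set (EuclideanSpace ℝ (Fin n))) : Prop :=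
  Measure.map X P = (volume A)⁻¹ • volume.restrict A

/-!
Write `M = ‖f‖` and `J = ∫ f log (M / f) = h(X) + log M`, so that the claim is `0 ≤ J ≤ n`; the
lower bound holds because `f ≤ M` almost everywhere. Integrating the log-concavity inequality
`f (t x + (1 - t) y) ≥ f(x)^t f(y)^(1-t)` in `x` gives `f(y)^(1-t) ∫ f^t ≤ t^(-n)`; for `t = 1/2`
this shows that `f` is bounded. The elementary inequality `u (1 + s log (M / u)) ≤ M^s u^(1-s)`
then gives `(1 - t) J + 1 ≤ M^(1-t) ∫ f^t ≤ (M / f(y))^(1-t) t^(-n)` for `0 < t < 1`. Both ends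
equal `1` at `t = 1`, so comparing their derivatives there yields `J ≤ n + log (M / f(y))`, and
`J ≤ n` follows by letting `f(y)` approach `M`.
-/

open Filter Topology

section HaarChangeOfVariables

variable {E : Type*} [NormedAddCommGroup E] [NormedSpace ℝ E] [MeasurableSpace E] [BorelSpace E]
  [FiniteDimensional ℝ E] (μ : Measure E) [μ.IsAddHaarMeasure]

theorem lintegral_comp_smul_add (F : E → ℝ≥0∞) {r : ℝ} (hr : r ≠ 0) (c : E) :
    ∫⁻ x, F (r • x + c) ∂μ = ENNReal.ofReal |(r ^ Module.finrank ℝ E)⁻¹| * ∫⁻ x, F x ∂μ :=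
  calc ∫⁻ x, F (r • x + c) ∂μ = ∫⁻ y, F (y + c) ∂(Measure.map (r • ·) μ) :=
        (lintegral_map_equiv (fun y => F (y + c))
          (Homeomorph.smul (isUnit_iff_ne_zero.2 hr).unit).toMeasurableEquiv).symm
    _ = _ := by
        rw [Measure.map_addHaar_smul μ hr, lintegral_smul_measure, lintegral_add_right_eq_self,
          smul_eq_mul]

end HaarChangeOfVariables

theorem Real.mul_log_div_nonneg {u M : ℝ} (hu : 0 ≤ u) (huM : u ≤ M) : 0 ≤ u * log (M / u) := by
  rcases hu.eq_or_lt with rfl | hu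
  · simp
  · exact mul_nonneg hu.le (log_nonneg ((one_le_div hu).2 huM))

theorem Real.mul_log_div_add_le {u M : ℝ} (hu : 0 ≤ u) (hM : 0 < M) (s : ℝ) :
    s * (u * log (M / u)) + u ≤ M ^ s * u ^ (1 - s) := by
  rcases hu.eq_or_lt with rfl | hu
  · simp only [zero_mul, mul_zero, add_zero]
    positivity
  have hexp : s * log (M / u) + 1 ≤ (M / u) ^ s := by
    rw [rpow_def_of_pos (div_pos hM hu), mul_comm]
    exact add_one_le_exp _
  calc s * (u * log (M / u)) + u = u * (s * log (M / u) + 1) := by ring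
    _ ≤ u * (M / u) ^ s := by gcongr
    _ = M ^ s * u ^ (1 - s) := by
        rw [div_rpow hM.le hu.le, rpow_sub hu, rpow_one]
        field_simp

theorem lintegral_mul_log_div_add_le {α : Type*} [MeasurableSpace α] {μ : Measure α}
    {f : α → ℝ} {M s : ℝ} (hfm : AEMeasurable f μ) (hf0 : ∀ᵐ x ∂μ, 0 ≤ f x)
    (hfM : ∀ᵐ x ∂μ, f x ≤ M) (hM : 0 < M) (hs : 0 ≤ s) :
    ENNReal.ofReal s * ∫⁻ x, ENNReal.ofReal (f x * log (M / f x)) ∂μ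
        + ∫⁻ x, ENNReal.ofReal (f x) ∂μ
      ≤ ENNReal.ofReal (M ^ s) * ∫⁻ x, ENNReal.ofReal (f x ^ (1 - s)) ∂μ := by
  rw [← lintegral_const_mul' _ _ ENNReal.ofReal_ne_top,
    ← lintegral_const_mul' _ _ ENNReal.ofReal_ne_top,
    ← lintegral_add_right' _ hfm.ennreal_ofReal]
  refine lintegral_mono_ae ?_
  filter_upwards [hf0, hfM] with x hx0 hxM
  rw [← ENNReal.ofReal_mul hs, ← ENNReal.ofReal_mul (rpow_nonneg hM.le _),
    ← ENNReal.ofReal_add (mul_nonneg hs (Real.mul_log_div_nonneg hx0 hxM)) hx0]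
  exact ENNReal.ofReal_le_ofReal (Real.mul_log_div_add_le hx0 hM s)

theorem le_natCast_add_log_of_forall_le {J K : ℝ} (n : ℕ) (hK : 0 < K)
    (h : ∀ t ∈ Set.Ioo (0 : ℝ) 1, (1 - t) * J + 1 ≤ K ^ (1 - t) / t ^ n) :
    J ≤ n + log K := by
  set ψ : ℝ → ℝ := fun t => K ^ (1 - t) / t ^ n
  have hψ : HasDerivAt ψ (-(n + log K)) 1 := by
    refine ((((hasDerivAt_id (1 : ℝ)).const_sub 1).const_rpow hK).fun_div (hasDerivAt_pow n 1)
      (by norm_num)).congr_deriv ?_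
    simp only [id, sub_self, rpow_zero, one_pow, mul_one, one_mul, div_one]
    ring
  have hslope : Tendsto (fun t => (ψ t - 1) / (1 - t)) (𝓝[<] 1) (𝓝 (n + log K)) := by
    have := (hasDerivAt_iff_tendsto_slope.1 hψ).neg.mono_left
      (nhdsWithin_mono 1 fun t (ht : t < 1) => ht.ne)
    refine (neg_neg (n + log K : ℝ) ▸ this).congr fun t => ?_
    simp only [slope_def_field, ψ, sub_self, rpow_zero, one_pow, div_one]
    rw [show 1 - t = -(t - 1) by ring, div_neg]
  refine ge_of_tendsto hslope ?_
  filter_upwards [Ioo_mem_nhdsLT zero_lt_one] with t ht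
  rw [le_div_iff₀ (sub_pos.2 ht.2)]
  linarith [h t ht]

section DensSup

variable {n : ℕ} {f : EuclideanSpace ℝ (Fin n) → ℝ}

theorem ae_le_densSup (hE : essSup (fun x => ENNReal.ofReal (f x)) volume ≠ ⊤) :
    ∀ᵐ x, f x ≤ densSup f := by
  filter_upwards [ENNReal.ae_le_essSup fun x => ENNReal.ofReal (f x)] with x hx
  exact (ENNReal.ofReal_le_iff_le_toReal hE).1 hx

theorem densSup_pos (hE : essSup (fun x => ENNReal.ofReal (f x)) volume ≠ ⊤)
    (hnorm : ∫⁻ x, ENNReal.ofReal (f x) = 1) : 0 < densSup f := by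
  refine ENNReal.toReal_pos (fun h0 => ?_) hE
  rw [lintegral_congr_ae (ENNReal.essSup_eq_zero_iff.1 h0), lintegral_zero_fun] at hnorm
  exact zero_ne_one hnorm

theorem densSup_le {B : ℝ} (hB : 0 ≤ B) (h : ∀ x, f x ≤ B) : densSup f ≤ B :=
  ENNReal.toReal_le_of_le_ofReal hB
    (essSup_le_of_ae_le _ (ae_of_all _ fun x => ENNReal.ofReal_le_ofReal (h x)))

end DensSup

namespace LogConcaveDensity

variable {n : ℕ} {f : EuclideanSpace ℝ (Fin n) → ℝ}

theorem rpow_mul_lintegral_rpow_le (hf : LogConcaveDensity f)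
    (hnorm : ∫⁻ x, ENNReal.ofReal (f x) = 1) {t : ℝ} (ht0 : 0 < t) (ht1 : t < 1)
    (y : EuclideanSpace ℝ (Fin n)) :
    ENNReal.ofReal (f y ^ (1 - t)) * ∫⁻ x, ENNReal.ofReal (f x ^ t)
      ≤ ENNReal.ofReal (t ^ n)⁻¹ :=
  calc ENNReal.ofReal (f y ^ (1 - t)) * ∫⁻ x, ENNReal.ofReal (f x ^ t)
      = ∫⁻ x, ENNReal.ofReal (f x ^ t * f y ^ (1 - t)) := by
        rw [← lintegral_const_mul' _ _ ENNReal.ofReal_ne_top]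
        congr with x
        rw [← ENNReal.ofReal_mul (rpow_nonneg (hf.1 y) _), mul_comm]
    _ ≤ ∫⁻ x, ENNReal.ofReal (f (t • x + (1 - t) • y)) :=
        lintegral_mono fun x => ENNReal.ofReal_le_ofReal (hf.2 x y t ht0 ht1)
    _ = ENNReal.ofReal (t ^ n)⁻¹ := by
        rw [lintegral_comp_smul_add volume (fun z => ENNReal.ofReal (f z)) ht0.ne', hnorm,
          finrank_euclideanSpace_fin, mul_one, abs_of_pos (by positivity)]

theorem essSup_ne_top (hf : LogConcaveDensity f) (hfm : AEMeasurable f)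
    (hnorm : ∫⁻ x, ENNReal.ofReal (f x) = 1) :
    essSup (fun x => ENNReal.ofReal (f x)) volume ≠ ⊤ := by
  set I := ∫⁻ x, ENNReal.ofReal (f x ^ (2⁻¹ : ℝ))
  have hsq : ∀ x, ENNReal.ofReal (f x) = ENNReal.ofReal (f x ^ (2⁻¹ : ℝ)) ^ 2 := fun x => by
    rw [← ENNReal.ofReal_pow (rpow_nonneg (hf.1 x) _), ← rpow_natCast, ← rpow_mul (hf.1 x)]
    norm_num
  have hI : I ≠ 0 := fun hI => by
    rw [lintegral_eq_zero_iff' (hfm.pow_const _).ennreal_ofReal] at hI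
    have hf0 : (fun x => ENNReal.ofReal (f x)) =ᵐ[volume] 0 :=
      hI.mono fun x hx => by simp_all
    rw [lintegral_congr_ae hf0, lintegral_zero_fun] at hnorm
    exact zero_ne_one hnorm
  set B := ENNReal.ofReal ((2⁻¹ : ℝ) ^ n)⁻¹ / I
  have hbound : ∀ y, ENNReal.ofReal (f y ^ (2⁻¹ : ℝ)) ≤ B := fun y => by
    rw [ENNReal.le_div_iff_mul_le (Or.inl hI) (Or.inr ENNReal.ofReal_ne_top)]
    simpa only [show (1 : ℝ) - 2⁻¹ = 2⁻¹ by norm_num] using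
      hf.rpow_mul_lintegral_rpow_le hnorm (t := 2⁻¹) (by norm_num) (by norm_num) y
  refine ne_top_of_le_ne_top (b := B ^ 2)
    (ENNReal.pow_ne_top (ENNReal.div_ne_top ENNReal.ofReal_ne_top hI))
    (essSup_le_of_ae_le _ (ae_of_all _ fun y => ?_))
  simpa only [hsq y] using pow_le_pow_left' (hbound y) 2

theorem rpow_mul_lintegral_mul_log_div_le (hf : LogConcaveDensity f) (hfm : AEMeasurable f)
    (hnorm : ∫⁻ x, ENNReal.ofReal (f x) = 1) {M : ℝ} (hM : 0 < M) (hfM : ∀ᵐ x, f x ≤ M)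
    {t : ℝ} (ht0 : 0 < t) (ht1 : t < 1) (y : EuclideanSpace ℝ (Fin n)) :
    ENNReal.ofReal (f y ^ (1 - t))
        * (ENNReal.ofReal (1 - t) * (∫⁻ x, ENNReal.ofReal (f x * log (M / f x))) + 1)
      ≤ ENNReal.ofReal (M ^ (1 - t)) * ENNReal.ofReal (t ^ n)⁻¹ := by
  have hgap := lintegral_mul_log_div_add_le hfm (ae_of_all _ hf.1) hfM hM (sub_nonneg.2 ht1.le)
  rw [hnorm, sub_sub_cancel] at hgap
  calc ENNReal.ofReal (f y ^ (1 - t))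
        * (ENNReal.ofReal (1 - t) * (∫⁻ x, ENNReal.ofReal (f x * log (M / f x))) + 1)
      ≤ ENNReal.ofReal (f y ^ (1 - t))
        * (ENNReal.ofReal (M ^ (1 - t)) * ∫⁻ x, ENNReal.ofReal (f x ^ t)) := by gcongr
    _ = ENNReal.ofReal (M ^ (1 - t))
        * (ENNReal.ofReal (f y ^ (1 - t)) * ∫⁻ x, ENNReal.ofReal (f x ^ t)) := by ring
    _ ≤ ENNReal.ofReal (M ^ (1 - t)) * ENNReal.ofReal (t ^ n)⁻¹ := by
        gcongr
        exact hf.rpow_mul_lintegral_rpow_le hnorm ht0 ht1 y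

theorem toReal_lintegral_mul_log_div_le (hf : LogConcaveDensity f) (hfm : AEMeasurable f)
    (hnorm : ∫⁻ x, ENNReal.ofReal (f x) = 1) {M : ℝ} (hM : 0 < M) (hfM : ∀ᵐ x, f x ≤ M)
    (hJ : ∫⁻ x, ENNReal.ofReal (f x * log (M / f x)) ≠ ⊤) {y : EuclideanSpace ℝ (Fin n)}
    (hy : 0 < f y) :
    (∫⁻ x, ENNReal.ofReal (f x * log (M / f x))).toReal ≤ n + log (M / f y) := by
  refine le_natCast_add_log_of_forall_le n (div_pos hM hy) fun t ⟨ht0, ht1⟩ => ?_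
  have h := ENNReal.toReal_mono (by finiteness)
    (hf.rpow_mul_lintegral_mul_log_div_le hfm hnorm hM hfM ht0 ht1 y)
  set J := ∫⁻ x, ENNReal.ofReal (f x * log (M / f x))
  simp only [ENNReal.toReal_mul, ENNReal.toReal_one,
    ENNReal.toReal_add (ENNReal.mul_ne_top ENNReal.ofReal_ne_top hJ) ENNReal.one_ne_top,
    ENNReal.toReal_ofReal (rpow_nonneg hy.le _), ENNReal.toReal_ofReal (sub_nonneg.2 ht1.le),
    ENNReal.toReal_ofReal (rpow_nonneg hM.le _),
    ENNReal.toReal_ofReal (inv_nonneg.2 (pow_nonneg ht0.le n))] at h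
  rw [div_rpow hM.le hy.le, div_div, le_div_iff₀ (by positivity)]
  calc ((1 - t) * J.toReal + 1) * (f y ^ (1 - t) * t ^ n)
      = f y ^ (1 - t) * ((1 - t) * J.toReal + 1) * t ^ n := by ring
    _ ≤ M ^ (1 - t) * (t ^ n)⁻¹ * t ^ n := by gcongr
    _ = M ^ (1 - t) := by field_simp

theorem lintegral_mul_log_densSup_div_le (hf : LogConcaveDensity f) (hfm : AEMeasurable f)
    (hnorm : ∫⁻ x, ENNReal.ofReal (f x) = 1) :
    ∫⁻ x, ENNReal.ofReal (f x * log (densSup f / f x)) ≤ n := by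
  have hE := hf.essSup_ne_top hfm hnorm
  have hM := densSup_pos hE hnorm
  have hfM := ae_le_densSup hE
  set M := densSup f
  set J := ∫⁻ x, ENNReal.ofReal (f x * log (M / f x)) with hJdef
  obtain ⟨y₀, hy₀⟩ : ∃ y, 0 < f y := by
    by_contra! h
    simp [ENNReal.ofReal_eq_zero.2 (h _)] at hnorm
  have hJ : J ≠ ⊤ := fun hJ => by
    have h := hf.rpow_mul_lintegral_mul_log_div_le hfm hnorm hM hfM (t := 2⁻¹) (by norm_num)
      (by norm_num) y₀
    rw [← hJdef, hJ, ENNReal.mul_top (by norm_num), top_add,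
      ENNReal.mul_top (by simp [rpow_pos_of_pos hy₀]), top_le_iff] at h
    exact ENNReal.mul_ne_top ENNReal.ofReal_ne_top ENNReal.ofReal_ne_top h
  have hbound : ∀ y, f y ≤ exp (n + log M - J.toReal) := fun y => by
    rcases (hf.1 y).eq_or_lt with h | hy
    · exact h ▸ (exp_pos _).le
    have hJy := hf.toReal_lintegral_mul_log_div_le hfm hnorm hM hfM hJ hy
    rw [← hJdef, log_div hM.ne' hy.ne'] at hJy
    calc f y = exp (log (f y)) := (exp_log hy).symm
      _ ≤ exp (n + log M - J.toReal) := exp_le_exp.2 (by linarith)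
  have hlogM := log_le_log hM (densSup_le (exp_pos _).le hbound)
  rw [log_exp] at hlogM
  exact (ENNReal.toReal_le_toReal hJ (ENNReal.natCast_ne_top n)).1
    (by rw [ENNReal.toReal_natCast]; linarith)

end LogConcaveDensity

theorem ent_eq_integral_mul_log_div_sub_log {n : ℕ} {f : EuclideanSpace ℝ (Fin n) → ℝ}
    (hint : ∫ x, f x = 1) {M : ℝ} (hM : M ≠ 0)
    (hg : Integrable fun x => f x * log (M / f x)) :
    ent f = (∫ x, f x * log (M / f x)) - log M := by
  have hfi : Integrable f := Integrable.of_integral_ne_zero (hint ▸ one_ne_zero)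
  have hpt : ∀ x, f x * log (f x) = f x * log M - f x * log (M / f x) := fun x => by
    rcases eq_or_ne (f x) 0 with h | h
    · simp [h]
    · rw [log_div hM h]
      ring
  rw [ent, integral_congr_ae (ae_of_all _ hpt), integral_sub (hfi.mul_const _) hg,
    integral_mul_const, hint]
  ring

/-- Entropy of a log-concave density is controlled by its maximum (Corollary 4.2):
-log ‖f‖ ≤ h(X) ≤ n - log ‖f‖. -/
theorem statement8 (n : ℕ) (f : EuclideanSpace ℝ (Fin n) → ℝ)
    (hf : LogConcaveDensity f) (hint : ∫ x, f x = 1) :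
    -Real.log (densSup f) ≤ ent f ∧ ent f ≤ n - Real.log (densSup f) := by
  have hfi : Integrable f := Integrable.of_integral_ne_zero (hint ▸ one_ne_zero)
  have hnorm : ∫⁻ x, ENNReal.ofReal (f x) = 1 := by
    rw [← ofReal_integral_eq_lintegral_ofReal hfi (ae_of_all _ hf.1), hint, ENNReal.ofReal_one]
  have hE := hf.essSup_ne_top hfi.aemeasurable hnorm
  have hM := densSup_pos hE hnorm
  have hg0 : ∀ᵐ x, 0 ≤ f x * log (densSup f / f x) :=
    (ae_le_densSup hE).mono fun x hx => Real.mul_log_div_nonneg (hf.1 x) hx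
  have hJ := hf.lintegral_mul_log_densSup_div_le hfi.aemeasurable hnorm
  have hgm : AEMeasurable fun x => f x * log (densSup f / f x) := by fun_prop
  have hg : Integrable fun x => f x * log (densSup f / f x) :=
    ⟨hgm.aestronglyMeasurable,
      (hasFiniteIntegral_iff_ofReal hg0).2 (hJ.trans_lt (ENNReal.natCast_lt_top n))⟩
  have hgn : ∫ x, f x * log (densSup f / f x) ≤ n := by
    rw [integral_eq_lintegral_of_nonneg_ae hg0 hgm.aestronglyMeasurable]
    simpa using ENNReal.toReal_mono (ENNReal.natCast_ne_top n) hJ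
  have hg0' : 0 ≤ ∫ x, f x * log (densSup f / f x) := integral_nonneg_of_ae hg0
  rw [ent_eq_integral_mul_log_div_sub_log hint hM.ne' hg]
  constructor <;> linarith
end

section
/- For any convex bodies A and B in ℝⁿ, sup_{x ∈ ℝⁿ} |(A − x) ∩ B| · |A − B| ≤ (2e)ⁿ · |A| · |B|, where A − x = {a − x : a ∈ A} and A − B = {a − b : a ∈ A, b ∈ B}. -/
open MeasureTheory ProbabilityTheory Real
open scoped Pointwise ENNReal

/-! For `S x := (A - {x}) ∩ B`, Fubini gives `∫ |S z| dz = |A| |B|`. Convexity gives, for every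
`y = a - b ∈ A - B`, the inclusion `½ S x + ½ b ⊆ S (½ (x + y))`, so `|S z| ≥ 2⁻ⁿ |S x|` on the set
`½ ({x} + (A - B))` of volume `2⁻ⁿ |A - B|`. Integrating over it yields
`|S x| |A - B| ≤ 4ⁿ |A| |B|`, and `4 ≤ 2e`. -/

theorem preimage_prodMk_setOf_add_mem {G : Type*} [AddCommGroup G] (A B : Set G) (x : G) :
    Prod.mk x ⁻¹' {p : G × G | p.1 + p.2 ∈ A ∧ p.2 ∈ B} = (A - {x}) ∩ B := by
  ext b
  simp [Set.sub_singleton, sub_eq_iff_eq_add, add_comm x b]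

theorem lintegral_measure_sub_singleton_inter {G : Type*} [AddCommGroup G] [MeasurableSpace G]
    [MeasurableAdd₂ G] (μ ν : Measure G) [SFinite μ] [SFinite ν]
    [μ.IsAddRightInvariant] {A B : Set G} (hA : MeasurableSet A) (hB : MeasurableSet B) :
    ∫⁻ x, ν ((A - {x}) ∩ B) ∂μ = μ A * ν B := by
  set W : Set (G × G) := {p | p.1 + p.2 ∈ A ∧ p.2 ∈ B}
  have hW : MeasurableSet W :=
    (hA.preimage (measurable_fst.add measurable_snd)).inter (hB.preimage measurable_snd)
  have hslice (b : G) : μ ((fun x => (x, b)) ⁻¹' W) = B.indicator (fun _ => μ A) b := by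
    by_cases hb : b ∈ B
    · have : (fun x => (x, b)) ⁻¹' W = (· + b) ⁻¹' A := by ext; simp [W, hb]
      rw [this, measure_preimage_add_right, Set.indicator_of_mem hb]
    · simp [W, hb]
  calc ∫⁻ x, ν ((A - {x}) ∩ B) ∂μ = (μ.prod ν) W := by
        rw [Measure.prod_apply hW]
        simp only [W, preimage_prodMk_setOf_add_mem]
    _ = ∫⁻ b, B.indicator (fun _ => μ A) b ∂ν := by
        simp_rw [Measure.prod_apply_symm hW, hslice]
    _ = μ A * ν B := by rw [lintegral_indicator hB, setLIntegral_const]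

theorem smul_sub_singleton_inter_add_singleton_subset {E : Type*} [AddCommGroup E] [Module ℝ E]
    {A B : Set E} (hA : Convex ℝ A) (hB : Convex ℝ B) {t : ℝ} (ht0 : 0 ≤ t) (ht1 : t ≤ 1)
    (x : E) {a b : E} (ha : a ∈ A) (hb : b ∈ B) :
    (1 - t) • ((A - {x}) ∩ B) + {t • b} ⊆ (A - {(1 - t) • x + t • (a - b)}) ∩ B := by
  rintro _ ⟨_, ⟨s, ⟨⟨a', ha', _, rfl, rfl⟩, hs⟩, rfl⟩, _, rfl, rfl⟩
  refine ⟨⟨(1 - t) • a' + t • a, hA ha' ha (by linarith) ht0 (by ring), _, rfl, by module⟩,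
    hB hs hb (by linarith) ht0 (by ring)⟩

section AddHaar

variable {E : Type*} [NormedAddCommGroup E] [NormedSpace ℝ E] [MeasurableSpace E] [BorelSpace E]
  [FiniteDimensional ℝ E] (μ : Measure E) [μ.IsAddHaarMeasure]

theorem ofReal_pow_mul_measure_le_measure_sub_singleton_inter {A B : Set E} (hA : Convex ℝ A)
    (hB : Convex ℝ B) {t : ℝ} (ht0 : 0 ≤ t) (ht1 : t ≤ 1) (x : E) {z : E}
    (hz : z ∈ {(1 - t) • x} + t • (A - B)) :
    ENNReal.ofReal ((1 - t) ^ Module.finrank ℝ E) * μ ((A - {x}) ∩ B) ≤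
      μ ((A - {z}) ∩ B) := by
  obtain ⟨_, rfl, _, ⟨_, ⟨a, ha, b, hb, rfl⟩, rfl⟩, rfl⟩ := hz
  calc ENNReal.ofReal ((1 - t) ^ Module.finrank ℝ E) * μ ((A - {x}) ∩ B)
      = μ ((1 - t) • ((A - {x}) ∩ B) + {t • b}) := by
        rw [Set.add_singleton, Set.image_add_right, measure_preimage_add_right,
          Measure.addHaar_smul_of_nonneg μ (by linarith)]
    _ ≤ μ ((A - {(1 - t) • x + t • (a - b)}) ∩ B) :=
        measure_mono (smul_sub_singleton_inter_add_singleton_subset hA hB ht0 ht1 x ha hb)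

theorem ofReal_pow_mul_measure_sub_singleton_inter_mul_measure_sub_le {A B : Set E}
    (hA : Convex ℝ A) (hB : Convex ℝ B) (hAm : MeasurableSet A) (hBm : MeasurableSet B) {t : ℝ}
    (ht0 : 0 ≤ t) (ht1 : t ≤ 1) (x : E) :
    ENNReal.ofReal (((1 - t) * t) ^ Module.finrank ℝ E) * μ ((A - {x}) ∩ B) * μ (A - B) ≤
      μ A * μ B := by
  set d := Module.finrank ℝ E
  set C : Set E := {(1 - t) • x} + t • (A - B)
  have hC : Convex ℝ C := (convex_singleton _).add ((hA.sub hB).smul t)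
  have hμC : μ C = ENNReal.ofReal (t ^ d) * μ (A - B) := by
    simp only [C, Set.singleton_add, Set.image_add_left, measure_preimage_add]
    rw [Measure.addHaar_smul_of_nonneg μ ht0]
  calc ENNReal.ofReal (((1 - t) * t) ^ d) * μ ((A - {x}) ∩ B) * μ (A - B)
      = ∫⁻ _ in C, ENNReal.ofReal ((1 - t) ^ d) * μ ((A - {x}) ∩ B) ∂μ := by
        rw [setLIntegral_const, hμC, mul_pow, ENNReal.ofReal_mul (by positivity)]
        ring
    _ ≤ ∫⁻ z in C, μ ((A - {z}) ∩ B) ∂μ :=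
        lintegral_mono_ae <| (ae_restrict_mem₀ (hC.nullMeasurableSet μ)).mono fun z hz =>
          ofReal_pow_mul_measure_le_measure_sub_singleton_inter μ hA hB ht0 ht1 x hz
    _ ≤ ∫⁻ z, μ ((A - {z}) ∩ B) ∂μ := setLIntegral_le_lintegral _ _
    _ = μ A * μ B := lintegral_measure_sub_singleton_inter μ μ hAm hBm

theorem measure_sub_singleton_inter_mul_measure_sub_le {A B : Set E}
    (hA : Convex ℝ A) (hB : Convex ℝ B) (hAm : MeasurableSet A) (hBm : MeasurableSet B) (x : E) :
    μ ((A - {x}) ∩ B) * μ (A - B) ≤ 4 ^ Module.finrank ℝ E * (μ A * μ B) := by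
  have h := ofReal_pow_mul_measure_sub_singleton_inter_mul_measure_sub_le μ hA hB hAm hBm
    (t := 2⁻¹) (by norm_num) (by norm_num) x
  have hquarter : ENNReal.ofReal (((1 - 2⁻¹) * 2⁻¹) ^ Module.finrank ℝ E) =
      (4 ^ Module.finrank ℝ E)⁻¹ := by
    rw [show (1 - 2⁻¹) * 2⁻¹ = (4⁻¹ : ℝ) by norm_num, ENNReal.ofReal_pow (by norm_num),
      ENNReal.ofReal_inv_of_pos (by norm_num), ENNReal.inv_pow, ENNReal.ofReal_ofNat]
  rwa [hquarter, mul_assoc, ENNReal.inv_mul_le_iff (by positivity) (by simp)] at h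

end AddHaar

/-- A Rogers–Shephard-type inequality:
sup_x |(A-x) ∩ B| · |A-B| ≤ (2e)ⁿ·|A|·|B|. -/
theorem statement11 (n : ℕ) (A B : Set (EuclideanSpace ℝ (Fin n)))
    (hA : IsConvexBody A) (hB : IsConvexBody B) :
    (⨆ x : EuclideanSpace ℝ (Fin n), volume ((A - {x}) ∩ B)) * volume (A - B) ≤
      ENNReal.ofReal ((2 * Real.exp 1) ^ n) * volume A * volume B := by
  obtain ⟨hAconv, hAcomp, -⟩ := hA
  obtain ⟨hBconv, hBcomp, -⟩ := hB
  have four_pow_le : (4 : ℝ≥0∞) ^ n ≤ ENNReal.ofReal ((2 * Real.exp 1) ^ n) := by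
    rw [ENNReal.ofReal_pow (by positivity)]
    gcongr
    rw [← ENNReal.ofReal_ofNat]
    exact ENNReal.ofReal_le_ofReal (by linarith [Real.add_one_le_exp 1])
  rw [ENNReal.iSup_mul, mul_assoc]
  refine iSup_le fun x => ?_
  calc volume ((A - {x}) ∩ B) * volume (A - B)
      ≤ 4 ^ n * (volume A * volume B) := by
        simpa [finrank_euclideanSpace_fin] using
          measure_sub_singleton_inter_mul_measure_sub_le volume hAconv hBconv
            hAcomp.isClosed.measurableSet hBcomp.isClosed.measurableSet x
    _ ≤ _ := by gcongr
end

section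
/- Fix β₀ > 1 and set c₀ = exp(−32β₀/(β₀ − 1)). Let μ be a probability measure on ℝⁿ whose density f is of convex form with parameter β, where β ≥ n+1 and β ≥ β₀·n. Then μ({x : f(x) ≥ c₀ⁿ·‖f‖}) ≥ 1/2. -/
open MeasureTheory ProbabilityTheory Real
open scoped Pointwise ENNReal

/-!
Write `f = V ^ (-β)` on `S` and pick `a ∈ S` where `f` is close to `‖f‖`. On the region `A` where
`V > e^ρ V(a)`, the homothety `T` of ratio `l` about `a` raises the density by the factor
`s^(-β)`, `s = l + (1 - l) e^(-ρ)`, because `V` is convex, while it shrinks volumes by `lⁿ`. Hence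
`1 ≥ μ(T A) ≥ lⁿ s^(-β) μ(A)`, and for `l = 1/2` (small `ρ`) or `l = e^(-ρ)` (large `ρ`) this
gives `μ(A) ≤ 1/2`. Off `A` we have `f ≥ e^(-ρβ) f(a)`, which is at least `c₀ⁿ ‖f‖`.
-/

open AffineMap Module

theorem exp_neg_le_one_sub_div_three {ρ : ℝ} (h0 : 0 ≤ ρ) (h2 : ρ ≤ 2) :
    exp (-ρ) ≤ 1 - ρ / 3 := by
  have h : exp (-ρ) * (1 + ρ) ≤ 1 :=
    calc exp (-ρ) * (1 + ρ) ≤ exp (-ρ) * exp ρ := by gcongr; linarith [add_one_le_exp ρ]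
      _ = 1 := by rw [← exp_add, neg_add_cancel, exp_zero]
  nlinarith [exp_pos (-ρ), mul_nonneg h0 (sub_nonneg.mpr h2)]

theorem two_mul_rpow_half_le {n : ℕ} (hn : 1 ≤ n) {β ρ : ℝ} (hβ : 0 ≤ β) (hρ0 : 0 ≤ ρ)
    (hρ2 : ρ ≤ 2) (hρβ : 24 * n ≤ β * ρ) :
    2 * ((1 + exp (-ρ)) / 2) ^ β ≤ (1 / 2) ^ n := by
  have hs : (1 + exp (-ρ)) / 2 ≤ exp (-(ρ / 6)) := by
    linarith [exp_neg_le_one_sub_div_three hρ0 hρ2, one_sub_le_exp_neg (ρ / 6)]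
  have hn' : (1 : ℝ) ≤ n := by exact_mod_cast hn
  calc 2 * ((1 + exp (-ρ)) / 2) ^ β ≤ exp 1 * exp (-(ρ / 6)) ^ β := by
        gcongr; linarith [add_one_le_exp (1 : ℝ)]
    _ = exp (1 - β * ρ / 6) := by rw [← exp_mul, ← exp_add]; ring_nf
    _ ≤ exp (-1) ^ n := by rw [← exp_nat_mul]; gcongr; linarith
    _ ≤ (1 / 2) ^ n := by gcongr; exact exp_neg_one_lt_half.le

theorem two_mul_rpow_exp_neg_le {n : ℕ} {β ρ : ℝ} (hβ : 0 ≤ β) (hρ : 0 ≤ ρ)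
    (h : β + 1 ≤ (β - n) * ρ) :
    2 * (exp (-ρ) + (1 - exp (-ρ)) * exp (-ρ)) ^ β ≤ exp (-ρ) ^ n := by
  have hs : exp (-ρ) + (1 - exp (-ρ)) * exp (-ρ) ≤ exp (1 - ρ) := by
    rw [show 1 - ρ = 1 + -ρ by ring, exp_add]
    nlinarith [exp_pos (-ρ), add_one_le_exp (1 : ℝ)]
  have hs0 : 0 ≤ exp (-ρ) + (1 - exp (-ρ)) * exp (-ρ) := by
    nlinarith [exp_pos (-ρ), exp_le_one_iff.mpr (neg_nonpos.mpr hρ)]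
  calc 2 * (exp (-ρ) + (1 - exp (-ρ)) * exp (-ρ)) ^ β ≤ exp 1 * exp (1 - ρ) ^ β :=
        mul_le_mul (by linarith [add_one_le_exp (1 : ℝ)]) (rpow_le_rpow hs0 hs hβ)
          (rpow_nonneg hs0 _) (exp_pos 1).le
    _ = exp (1 + (1 - ρ) * β) := by rw [← exp_mul, ← exp_add]
    _ ≤ exp (-ρ) ^ n := by rw [← exp_nat_mul]; gcongr; linarith

theorem exists_two_mul_rpow_le {n : ℕ} (hn : 1 ≤ n) {β ρ : ℝ} (hβ : (n : ℝ) < β)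
    (hρ : 24 * n ≤ (β - n) * ρ) :
    ∃ l, 0 < l ∧ l ≤ 1 ∧ 2 * (l + (1 - l) * exp (-ρ)) ^ β ≤ l ^ n := by
  have hn' : (1 : ℝ) ≤ n := by exact_mod_cast hn
  have hρ0 : 0 < ρ := by nlinarith
  rcases le_or_gt ρ 2 with hρ2 | hρ2
  · refine ⟨1 / 2, by norm_num, by norm_num, ?_⟩
    have h := two_mul_rpow_half_le hn (β := β) (by linarith) hρ0.le hρ2 (by nlinarith)
    convert h using 3
    ring
  · exact ⟨exp (-ρ), exp_pos _, exp_le_one_iff.mpr (by linarith),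
      two_mul_rpow_exp_neg_le (by linarith) hρ0.le (by nlinarith)⟩

section Homothety

variable {E : Type*} [NormedAddCommGroup E] [NormedSpace ℝ E]

theorem hasFDerivAt_homothety (a : E) (l : ℝ) (x : E) :
    HasFDerivAt (homothety a l) (l • ContinuousLinearMap.id ℝ E) x := by
  rw [coe_homothety]
  exact (((hasFDerivAt_id x).sub_const a).const_smul l).add_const a

variable [FiniteDimensional ℝ E] [MeasurableSpace E] [BorelSpace E]

theorem lintegral_image_homothety (ν : Measure E) [ν.IsAddHaarMeasure] (a : E) {l : ℝ}
    (hl : l ≠ 0) {s : Set E} (hs : MeasurableSet s) (g : E → ℝ≥0∞) :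
    ∫⁻ x in homothety a l '' s, g x ∂ν =
      ENNReal.ofReal (|l| ^ finrank ℝ E) * ∫⁻ x in s, g (homothety a l x) ∂ν := by
  rw [lintegral_image_eq_lintegral_abs_det_fderiv_mul ν hs
    (fun x _ => (hasFDerivAt_homothety a l x).hasFDerivWithinAt)
    (homothety_injective a hl).injOn, lintegral_const_mul' _ _ ENNReal.ofReal_ne_top]
  simp [ContinuousLinearMap.det, LinearMap.det_smul, abs_pow]

end Homothety

section ConvexForm

variable {E : Type*} {S : Set E} {V f : E → ℝ} {β : ℝ}

theorem rpow_neg_mul_le_of_le_mul (hVpos : ∀ x ∈ S, 0 < V x) (hf : ∀ x ∈ S, f x = V x ^ (-β))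
    (hβ : 0 ≤ β) {a x : E} (ha : a ∈ S) (hx : x ∈ S) {t : ℝ} (ht : 0 < t) (h : V x ≤ t * V a) :
    t ^ (-β) * f a ≤ f x := by
  rw [hf a ha, hf x hx, ← mul_rpow ht.le (hVpos a ha).le]
  exact rpow_le_rpow_of_nonpos (hVpos x hx) h (by linarith)

variable [AddCommGroup E] [Module ℝ E]

theorem le_mul_apply_homothety_of_convexOn (hS : Convex ℝ S) (hV : ConvexOn ℝ S V)
    (hVpos : ∀ x ∈ S, 0 < V x) (hf : ∀ x ∈ S, f x = V x ^ (-β)) (hβ : 0 ≤ β)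
    {a x : E} (ha : a ∈ S) (hx : x ∈ S) {l q : ℝ} (hl0 : 0 < l) (hl1 : l ≤ 1) (hq : 0 ≤ q)
    (hax : V a ≤ q * V x) :
    f x ≤ (l + (1 - l) * q) ^ β * f (homothety a l x) := by
  have hs : 0 < l + (1 - l) * q := by nlinarith
  have hT : homothety a l x = (1 - l) • a + l • x := by
    rw [homothety_eq_lineMap, lineMap_apply_module]
  have hTS : homothety a l x ∈ S := hT ▸ hS ha hx (by linarith) hl0.le (by ring)
  have hVT : V (homothety a l x) ≤ (l + (1 - l) * q) * V x := by
    calc V (homothety a l x) ≤ (1 - l) * V a + l * V x :=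
          hT ▸ hV.2 ha hx (by linarith) hl0.le (by ring)
      _ ≤ (1 - l) * (q * V x) + l * V x := by gcongr
      _ = _ := by ring
  rw [hf x hx, hf _ hTS]
  calc V x ^ (-β) = (l + (1 - l) * q) ^ β * ((l + (1 - l) * q) * V x) ^ (-β) := by
        rw [mul_rpow hs.le (hVpos x hx).le, ← mul_assoc, ← rpow_add hs]; simp
    _ ≤ _ := mul_le_mul_of_nonneg_left
        (rpow_le_rpow_of_nonpos (hVpos _ hTS) hVT (by linarith)) (rpow_nonneg hs.le _)

end ConvexForm

section Haar

variable {E : Type*} [NormedAddCommGroup E] [NormedSpace ℝ E] [FiniteDimensional ℝ E]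
  [MeasurableSpace E] [BorelSpace E] (ν : Measure E) [ν.IsAddHaarMeasure]
  {S : Set E} {V f : E → ℝ} {β : ℝ}

theorem ofReal_pow_mul_withDensity_le_of_convexOn (hS : Convex ℝ S) (hV : ConvexOn ℝ S V)
    (hVpos : ∀ x ∈ S, 0 < V x) (hf : ∀ x ∈ S, f x = V x ^ (-β)) (hβ : 0 ≤ β)
    {a : E} (ha : a ∈ S) {l q : ℝ} (hl0 : 0 < l) (hl1 : l ≤ 1) (hq : 0 ≤ q)
    {A : Set E} (hA : MeasurableSet A) (hAS : A ⊆ S) (hAq : ∀ x ∈ A, V a ≤ q * V x) :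
    ENNReal.ofReal (l ^ finrank ℝ E) * ν.withDensity (fun x => ENNReal.ofReal (f x)) A ≤
      ENNReal.ofReal ((l + (1 - l) * q) ^ β) *
        ν.withDensity (fun x => ENNReal.ofReal (f x)) (homothety a l '' A) := by
  rw [withDensity_apply', withDensity_apply', lintegral_image_homothety ν a hl0.ne' hA,
    abs_of_pos hl0, mul_left_comm,
    ← lintegral_const_mul' (ENNReal.ofReal ((l + (1 - l) * q) ^ β)) _ ENNReal.ofReal_ne_top]
  refine mul_le_mul_right (setLIntegral_mono' hA fun x hx => ?_) _
  rw [← ENNReal.ofReal_mul (rpow_nonneg (by nlinarith) _)]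
  exact ENNReal.ofReal_le_ofReal
    (le_mul_apply_homothety_of_convexOn hS hV hVpos hf hβ ha (hAS hx) hl0 hl1 hq (hAq x hx))

theorem withDensity_setOf_lt_le_half (μ : Measure E) [IsProbabilityMeasure μ]
    (hμ : μ = ν.withDensity (fun x => ENNReal.ofReal (f x))) (hSo : IsOpen S)
    (hS : Convex ℝ S) (hV : ConvexOn ℝ S V) (hVpos : ∀ x ∈ S, 0 < V x)
    (hf : ∀ x ∈ S, f x = V x ^ (-β)) (hd : 1 ≤ finrank ℝ E) (hβ : (finrank ℝ E : ℝ) < β)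
    {ρ : ℝ} (hρ : 24 * finrank ℝ E ≤ (β - finrank ℝ E) * ρ) {a : E} (ha : a ∈ S) :
    μ {x ∈ S | exp ρ * V a < V x} ≤ 1 / 2 := by
  obtain ⟨l, hl0, hl1, hl⟩ := exists_two_mul_rpow_le hd hβ hρ
  have hA : MeasurableSet {x ∈ S | exp ρ * V a < V x} :=
    ((hV.continuousOn hSo).isOpen_inter_preimage hSo isOpen_Ioi).measurableSet
  have hAq : ∀ x ∈ {x ∈ S | exp ρ * V a < V x}, V a ≤ exp (-ρ) * V x := fun x hx => by
    rw [exp_neg, inv_mul_eq_div, le_div_iff₀ (exp_pos ρ), mul_comm]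
    exact hx.2.le
  have key := ofReal_pow_mul_withDensity_le_of_convexOn ν hS hV hVpos hf (by linarith) ha
    hl0 hl1 (exp_pos _).le hA (Set.sep_subset _ _) hAq
  rw [← hμ] at key
  have hL : ENNReal.ofReal (l ^ finrank ℝ E) ≠ 0 := by positivity
  refine (ENNReal.mul_le_mul_iff_right hL ENNReal.ofReal_ne_top).mp (key.trans ?_)
  calc ENNReal.ofReal ((l + (1 - l) * exp (-ρ)) ^ β) * μ (homothety a l '' _)
      ≤ ENNReal.ofReal (l ^ finrank ℝ E / 2) * 1 := by
        gcongr
        · linarith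
        · exact prob_le_one
    _ = _ := by
        rw [mul_one, ENNReal.ofReal_div_of_pos two_pos, ENNReal.ofReal_ofNat, div_eq_mul_inv,
          one_div]

end Haar

theorem half_le_measure_of_measure_le_half {α : Type*} [MeasurableSpace α] {μ : Measure α}
    [IsProbabilityMeasure μ] {A B : Set α} (hA : μ A ≤ 1 / 2) (h : ∀ᵐ x ∂μ, x ∉ A → x ∈ B) :
    1 / 2 ≤ μ B := by
  have h1 : 1 ≤ μ B + 1 / 2 :=
    calc 1 = μ Set.univ := measure_univ.symm
      _ ≤ μ (B ∪ A) :=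
        measure_mono_ae (h.mono fun x hx _ => (em (x ∈ A)).elim Or.inr (Or.inl ∘ hx))
      _ ≤ μ B + μ A := measure_union_le _ _
      _ ≤ μ B + 1 / 2 := by gcongr
  rwa [← tsub_le_iff_right, one_div, ENNReal.one_sub_inv_two, ← one_div] at h1

section Density

variable {n : ℕ} {f : EuclideanSpace ℝ (Fin n) → ℝ}

theorem densSup_nonneg : 0 ≤ densSup f := ENNReal.toReal_nonneg

theorem densSup_le_of_ae_le {c : ℝ} (hc : 0 ≤ c) (h : ∀ᵐ x, f x ≤ c) : densSup f ≤ c :=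
  calc densSup f ≤ (ENNReal.ofReal c).toReal := ENNReal.toReal_mono ENNReal.ofReal_ne_top
        (essSup_le_of_ae_le _ (h.mono fun _ hx => ENNReal.ofReal_le_ofReal hx))
    _ = c := ENNReal.toReal_ofReal hc

theorem exists_lt_of_lt_densSup {c : ℝ} (hc : 0 ≤ c) (h : c < densSup f) : ∃ x, c < f x := by
  by_contra! h'
  exact (densSup_le_of_ae_le hc (ae_of_all _ h')).not_gt h

theorem ConvexForm.nonneg {β : ℝ} (hf : ConvexForm f β) (x : EuclideanSpace ℝ (Fin n)) :
    0 ≤ f x := by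
  obtain ⟨S, V, -, -, -, hVpos, hfS, hfSc⟩ := hf
  by_cases hx : x ∈ S
  · rw [hfS x hx]; exact rpow_nonneg (hVpos x hx).le _
  · rw [hfSc x hx]

theorem ConvexForm.half_le_measure_setOf_mul_densSup_le {β : ℝ} (hf : ConvexForm f β)
    (μ : Measure (EuclideanSpace ℝ (Fin n))) [IsProbabilityMeasure μ]
    (hμ : μ = volume.withDensity (fun x => ENNReal.ofReal (f x))) (hn : 1 ≤ n) (hβ : (n : ℝ) < β)
    {ρ : ℝ} (hρ : 24 * n ≤ (β - n) * ρ) {c : ℝ} (hc0 : 0 ≤ c) (hc : c < exp ρ ^ (-β)) :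
    1 / 2 ≤ μ {x | c * densSup f ≤ f x} := by
  rcases densSup_nonneg.eq_or_lt with hM | hM
  · exact half_le_measure_of_measure_le_half (A := ∅) (by simp)
      (ae_of_all _ fun x _ => show c * densSup f ≤ f x by rw [← hM, mul_zero]; exact hf.nonneg x)
  obtain ⟨S, V, hSo, hS, hV, hVpos, hfS, hfSc⟩ := hf
  have ht : 0 < exp ρ ^ (-β) := rpow_pos_of_pos (exp_pos ρ) _
  obtain ⟨a, ha⟩ := exists_lt_of_lt_densSup (c := c / exp ρ ^ (-β) * densSup f) (by positivity)
    (mul_lt_of_lt_one_left hM ((div_lt_one ht).mpr hc))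
  have haS : a ∈ S := by
    by_contra h
    rw [hfSc a h] at ha
    linarith [mul_nonneg (div_nonneg hc0 ht.le) hM.le]
  have hSae : ∀ᵐ x ∂μ, x ∈ S := by
    rw [ae_iff, hμ, withDensity_apply']
    exact (setLIntegral_congr_fun hSo.measurableSet.compl fun x hx => by
      rw [hfSc x hx, ENNReal.ofReal_zero]).trans lintegral_zero
  have hhalf := withDensity_setOf_lt_le_half volume μ hμ hSo hS hV hVpos hfS
    (by simpa using hn) (by simpa using hβ) (by simpa using hρ) haS
  refine half_le_measure_of_measure_le_half hhalf (hSae.mono fun x hxS hxA => ?_)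
  calc c * densSup f = exp ρ ^ (-β) * (c / exp ρ ^ (-β) * densSup f) := by field_simp
    _ ≤ exp ρ ^ (-β) * f a := by gcongr
    _ ≤ f x := rpow_neg_mul_le_of_le_mul hVpos hfS (by linarith) haS hxS (exp_pos ρ)
        (not_lt.mp fun h => hxA ⟨hxS, h⟩)

end Density

theorem statement12_general (β₀ : ℝ) (hβ₀ : 1 < β₀) (n : ℕ) (β : ℝ)
    (hβ2 : β₀ * n ≤ β)
    (μ : Measure (EuclideanSpace ℝ (Fin n))) [IsProbabilityMeasure μ]
    (f : EuclideanSpace ℝ (Fin n) → ℝ)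
    (hμ : μ = volume.withDensity (fun x => ENNReal.ofReal (f x)))
    (hf : ConvexForm f β) :
    (1 / 2 : ℝ≥0∞) ≤
      μ {x | Real.exp (-32 * β₀ / (β₀ - 1)) ^ n * densSup f ≤ f x} := by
  rcases Nat.eq_zero_or_pos n with rfl | hn
  · refine half_le_measure_of_measure_le_half (A := ∅) (by simp) (ae_of_all _ fun x _ => ?_)
    simpa using densSup_le_of_ae_le (hf.nonneg x)
      (ae_of_all _ fun y => (congrArg f (Subsingleton.elim y x)).le)
  set γ := β₀ / (β₀ - 1) with hγ
  have hn1 : (1 : ℝ) ≤ n := Nat.one_le_cast.mpr hn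
  have hγ1 : 1 < γ := by rw [hγ, lt_div_iff₀ (by linarith)]; linarith
  have hβ : (n : ℝ) < β := by nlinarith
  have hβ0 : 0 < β := by linarith
  -- `c₀ⁿ = exp (-32 γ n)`: `ρ β = 24 γ n` goes to the homothety, the rest to the choice of `a`
  refine hf.half_le_measure_setOf_mul_densSup_le μ hμ hn hβ (ρ := 24 * γ * n / β) ?_
    (by positivity) ?_
  · have hγβ : β ≤ γ * (β - n) := by
      rw [hγ, div_mul_eq_mul_div, le_div_iff₀ (by linarith)]
      nlinarith
    calc (24 * n : ℝ) = 24 * n / β * β := by field_simp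
      _ ≤ 24 * n / β * (γ * (β - n)) :=
        mul_le_mul_of_nonneg_left hγβ (div_nonneg (by positivity) hβ0.le)
      _ = (β - n) * (24 * γ * n / β) := by ring
  · rw [← exp_nat_mul, ← exp_mul, exp_lt_exp, mul_neg, div_mul_cancel₀ _ hβ0.ne', mul_div_assoc,
      ← hγ]
    nlinarith

/-- Effective support of convex measures (Proposition 5.2): a sufficiently convex
probability measure gives mass at least 1/2 to the set where its density is at least
c₀ⁿ·‖f‖, with c₀ = exp(-32β₀/(β₀-1)). -/
theorem statement12 (β₀ : ℝ) (hβ₀ : 1 < β₀) (n : ℕ) (β : ℝ)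
    (hβ1 : (n : ℝ) + 1 ≤ β) (hβ2 : β₀ * n ≤ β)
    (μ : Measure (EuclideanSpace ℝ (Fin n))) [IsProbabilityMeasure μ]
    (f : EuclideanSpace ℝ (Fin n) → ℝ)
    (hμ : μ = volume.withDensity (fun x => ENNReal.ofReal (f x)))
    (hf : ConvexForm f β) :
    (1 / 2 : ℝ≥0∞) ≤
      μ {x | Real.exp (-32 * β₀ / (β₀ - 1)) ^ n * densSup f ≤ f x} :=
  statement12_general β₀ hβ₀ n β hβ2 μ f hμ hf
end

section
/- For any convex bodies A, B, D in ℝⁿ, |A + B|^{1/n} · |D|^{1/n} ≤ 2 · |A + D|^{1/n} · |B + D|^{1/n}. -/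
open MeasureTheory ProbabilityTheory Real
open scoped Pointwise ENNReal

/-!
Two applications of the Ruzsa triangle inequality `|X - Z| |Y| ≤ |X + Y| |Z + Y|` give
`|A + B| |D| ≤ |A + D| |D - B|` and `|D - B| |D| ≤ |D + D| |B + D|`. For convex `D` we have
`D + D = 2 • D`, so `|D + D| = 2ⁿ |D|`; cancelling `|D|` and taking `n`-th roots gives the claim.
-/

section Ruzsa

variable {G : Type*} [AddCommGroup G] [MeasurableSpace G] [MeasurableAdd₂ G]
  (μ : Measure G) [SFinite μ] [μ.IsAddLeftInvariant]

theorem ruzsa_triangle_inequality_measure_sub_add_add {A B C : Set G}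
    (hAB : MeasurableSet (A + B)) (hCB : MeasurableSet (C + B)) :
    μ (A - C) * μ B ≤ μ (A + B) * μ (C + B) := by
  set f := (A + B).indicator (1 : G → ℝ≥0∞)
  set g := (C + B).indicator (1 : G → ℝ≥0∞)
  have hf : Measurable f := measurable_one.indicator hAB
  have hg : Measurable g := measurable_one.indicator hCB
  have hF : Measurable fun p : G × G => f (p.2 + p.1) * g p.2 := by fun_prop
  -- `Φ t` is the measure of `(A + B - t) ∩ (C + B)`, a set containing `c + B` when `t = a - c`;
  -- by Fubini its integral is `μ (A + B) * μ (C + B)`.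
  set Φ : G → ℝ≥0∞ := fun t => ∫⁻ y, f (y + t) * g y ∂μ
  have hΦ_ge : ∀ t ∈ A - C, μ B ≤ Φ t := by
    rintro _ ⟨a, ha, c, hc, rfl⟩
    have hsub : c +ᵥ B ⊆ {y | 1 ≤ f (y + (a - c)) * g y} := by
      rintro _ ⟨b, hb, rfl⟩
      have h1 : c + b + (a - c) ∈ A + B := by
        rw [show c + b + (a - c) = a + b by abel]
        exact Set.add_mem_add ha hb
      have h2 : c + b ∈ C + B := Set.add_mem_add hc hb
      simp [f, g, h1, h2]
    calc μ B = 1 * μ (c +ᵥ B) := by rw [measure_vadd, one_mul]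
      _ ≤ 1 * μ {y | 1 ≤ f (y + (a - c)) * g y} := by gcongr
      _ ≤ Φ (a - c) := mul_meas_ge_le_lintegral₀ (by fun_prop) 1
  have hΦ_int : ∫⁻ t, Φ t ∂μ = μ (A + B) * μ (C + B) := by
    rw [lintegral_lintegral_swap hF.aemeasurable]
    have h_inner : ∀ y, ∫⁻ t, f (y + t) * g y ∂μ = μ (A + B) * g y := fun y => by
      rw [lintegral_mul_const _ (by fun_prop),
        lintegral_add_left_eq_self f y, lintegral_indicator_one hAB]
    simp_rw [h_inner]
    rw [lintegral_const_mul _ hg, lintegral_indicator_one hCB]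
  calc μ (A - C) * μ B = μ B * μ (A - C) := mul_comm _ _
    _ ≤ μ B * μ {t | μ B ≤ Φ t} := by gcongr; exact hΦ_ge
    _ ≤ ∫⁻ t, Φ t ∂μ := mul_meas_ge_le_lintegral₀ (hF.lintegral_prod_right').aemeasurable _
    _ = μ (A + B) * μ (C + B) := hΦ_int

end Ruzsa

section AddHaar

variable {E : Type*} [NormedAddCommGroup E] [NormedSpace ℝ E] [FiniteDimensional ℝ E]
  [MeasurableSpace E] [BorelSpace E] (μ : Measure E) [μ.IsAddHaarMeasure]

theorem Convex.addHaar_add_self {D : Set E} (hD : Convex ℝ D) :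
    μ (D + D) = ENNReal.ofReal (2 ^ Module.finrank ℝ E) * μ D := by
  have h := hD.add_smul zero_le_one zero_le_one
  rw [one_smul, one_add_one_eq_two] at h
  rw [← h, Measure.addHaar_smul_of_nonneg μ zero_le_two]

theorem addHaar_add_mul_le {A B D : Set E} (hA : IsCompact A) (hB : IsCompact B)
    (hD : IsCompact D) (hDc : Convex ℝ D) :
    μ (A + B) * μ D ≤ ENNReal.ofReal (2 ^ Module.finrank ℝ E) * (μ (A + D) * μ (B + D)) := by
  rcases eq_or_ne (μ D) 0 with hD0 | hD0
  · simp [hD0]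
  have hDB : μ (D - B) ≤ ENNReal.ofReal (2 ^ Module.finrank ℝ E) * μ (B + D) := by
    refine (ENNReal.mul_le_mul_iff_left hD0 hD.measure_lt_top.ne).1 ?_
    calc μ (D - B) * μ D ≤ μ (D + D) * μ (B + D) :=
          ruzsa_triangle_inequality_measure_sub_add_add μ
            (hD.add hD).isClosed.measurableSet (hB.add hD).isClosed.measurableSet
      _ = ENNReal.ofReal (2 ^ Module.finrank ℝ E) * μ (B + D) * μ D := by
          rw [hDc.addHaar_add_self μ]; ring
  have hAB : μ (A + B) * μ D ≤ μ (A + D) * μ (D - B) := by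
    have h := ruzsa_triangle_inequality_measure_sub_add_add μ (C := -B)
      (hA.add hD).isClosed.measurableSet (hB.neg.add hD).isClosed.measurableSet
    rwa [sub_neg_eq_add, ← sub_eq_neg_add] at h
  calc μ (A + B) * μ D ≤ μ (A + D) * μ (D - B) := hAB
    _ ≤ μ (A + D) * (ENNReal.ofReal (2 ^ Module.finrank ℝ E) * μ (B + D)) := by gcongr
    _ = ENNReal.ofReal (2 ^ Module.finrank ℝ E) * (μ (A + D) * μ (B + D)) := by ring

end AddHaar

theorem rpow_one_div_le_two_mul_of_le_two_pow_mul {n : ℕ} {a b : ℝ} (ha : 0 ≤ a) (hb : 0 ≤ b)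
    (h : a ≤ 2 ^ n * b) : a ^ ((1 : ℝ) / n) ≤ 2 * b ^ ((1 : ℝ) / n) := by
  rcases eq_or_ne n 0 with rfl | hn
  · norm_num
  calc a ^ ((1 : ℝ) / n) ≤ (2 ^ n * b) ^ ((1 : ℝ) / n) := by gcongr
    _ = 2 * b ^ ((1 : ℝ) / n) := by
      rw [Real.mul_rpow (by positivity) hb, one_div, Real.pow_rpow_inv_natCast zero_le_two hn]

theorem statement17_general (n : ℕ)
    (A B D : Set (EuclideanSpace ℝ (Fin n)))
    (hA : IsConvexBody A) (hB : IsConvexBody B) (hD : IsConvexBody D) :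
    (volume (A + B)).toReal ^ ((1 : ℝ) / n) * (volume D).toReal ^ ((1 : ℝ) / n) ≤
      2 * ((volume (A + D)).toReal ^ ((1 : ℝ) / n) *
        (volume (B + D)).toReal ^ ((1 : ℝ) / n)) := by
  obtain ⟨-, hA, -⟩ := hA
  obtain ⟨-, hB, -⟩ := hB
  obtain ⟨hDc, hD, -⟩ := hD
  have key := addHaar_add_mul_le volume hA hB hD hDc
  rw [finrank_euclideanSpace_fin] at key
  have hreal := ENNReal.toReal_mono (ENNReal.mul_ne_top ENNReal.ofReal_ne_top
    (ENNReal.mul_ne_top (hA.add hD).measure_lt_top.ne (hB.add hD).measure_lt_top.ne)) key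
  simp only [ENNReal.toReal_mul, ENNReal.toReal_ofReal (by positivity : (0 : ℝ) ≤ 2 ^ n)]
    at hreal
  rw [← mul_rpow (by positivity) (by positivity), ← mul_rpow (by positivity) (by positivity)]
  exact rpow_one_div_le_two_mul_of_le_two_pow_mul (by positivity) (by positivity) hreal

/-- Volume submodularity for convex bodies (inequality (6.2)):
|A+B|^(1/n)·|D|^(1/n) ≤ 2·|A+D|^(1/n)·|B+D|^(1/n). -/
theorem statement17 (n : ℕ) (hn : 1 ≤ n)
    (A B D : Set (EuclideanSpace ℝ (Fin n)))
    (hA : IsConvexBody A) (hB : IsConvexBody B) (hD : IsConvexBody D) :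
    (volume (A + B)).toReal ^ ((1 : ℝ) / n) * (volume D).toReal ^ ((1 : ℝ) / n) ≤
      2 * ((volume (A + D)).toReal ^ ((1 : ℝ) / n) *
        (volume (B + D)).toReal ^ ((1 : ℝ) / n)) :=
  statement17_general n A B D hA hB hD
end

section
/- For any log-concave probability density f on ℝⁿ, 2^{−n}·‖f‖ ≤ ∫_{ℝⁿ} f(x)² dx ≤ ‖f‖. -/
open MeasureTheory ProbabilityTheory Real
open scoped Pointwise ENNReal

/-!
Midpoint log-concavity gives `f x₀ * f y ≤ f ((x₀ + y) / 2) ^ 2`. Integrating in `y`, and using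
that `y ↦ (x₀ + y) / 2` scales Lebesgue measure by `2⁻ⁿ`, yields `f x₀ ≤ 2ⁿ ∫ f²` for every `x₀`.
The upper bound is `∫ f² ≤ ‖f‖ ∫ f`.
-/

section AddHaar

variable {E : Type*} [NormedAddCommGroup E] [NormedSpace ℝ E] [MeasurableSpace E] [BorelSpace E]
  [FiniteDimensional ℝ E] (μ : Measure E) [μ.IsAddHaarMeasure]

theorem lintegral_comp_smul (g : E → ℝ≥0∞) {r : ℝ} (hr : r ≠ 0) :
    ∫⁻ x, g (r • x) ∂μ = ENNReal.ofReal |(r ^ Module.finrank ℝ E)⁻¹| * ∫⁻ x, g x ∂μ := by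
  rw [← smul_eq_mul, ← lintegral_smul_measure, ← Measure.map_addHaar_smul μ hr]
  exact (lintegral_map_equiv g (Homeomorph.smulOfNeZero r hr).toMeasurableEquiv).symm

theorem lintegral_comp_add_half_smul (g : E → ℝ≥0∞) (c : E) :
    ∫⁻ y, g (c + (2 : ℝ)⁻¹ • y) ∂μ = 2 ^ Module.finrank ℝ E * ∫⁻ x, g x ∂μ := by
  rw [lintegral_comp_smul μ (fun y => g (c + y)) (by norm_num), lintegral_add_left_eq_self,
    inv_pow, inv_inv, abs_of_nonneg (by positivity), ENNReal.ofReal_pow zero_le_two,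
    ENNReal.ofReal_ofNat]

end AddHaar

theorem lintegral_sq_le_essSup_mul_lintegral {α : Type*} [MeasurableSpace α] {μ : Measure α}
    {F : α → ℝ≥0∞} (hF : AEMeasurable F μ) :
    ∫⁻ x, F x ^ 2 ∂μ ≤ essSup F μ * ∫⁻ x, F x ∂μ := by
  rw [← lintegral_const_mul'' _ hF]
  refine lintegral_mono_ae ?_
  filter_upwards [ae_le_essSup (f := F)] with x hx
  rw [sq]
  exact mul_le_mul_left hx _

namespace LogConcaveDensity

variable {n : ℕ} {f : EuclideanSpace ℝ (Fin n) → ℝ}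

theorem mul_le_sq_midpoint (hf : LogConcaveDensity f) (x y : EuclideanSpace ℝ (Fin n)) :
    f x * f y ≤ f ((2 : ℝ)⁻¹ • x + (2 : ℝ)⁻¹ • y) ^ 2 := by
  have hmid := hf.2 x y 2⁻¹ (by norm_num) (by norm_num)
  rw [show (1 - 2⁻¹ : ℝ) = 2⁻¹ by norm_num] at hmid
  calc f x * f y = (f x ^ (2⁻¹ : ℝ) * f y ^ (2⁻¹ : ℝ)) ^ 2 := by
        have hsq (a : ℝ) (ha : 0 ≤ a) : (a ^ (2⁻¹ : ℝ)) ^ 2 = a := by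
          simpa using Real.rpow_inv_natCast_pow ha two_ne_zero
        rw [mul_pow, hsq _ (hf.1 x), hsq _ (hf.1 y)]
    _ ≤ _ := pow_le_pow_left₀ (mul_nonneg (rpow_nonneg (hf.1 x) _) (rpow_nonneg (hf.1 y) _)) hmid 2

theorem ofReal_le_two_pow_mul_lintegral_sq (hf : LogConcaveDensity f)
    (hf1 : ∫⁻ x, ENNReal.ofReal (f x) = 1) (x₀ : EuclideanSpace ℝ (Fin n)) :
    ENNReal.ofReal (f x₀) ≤ 2 ^ n * ∫⁻ x, ENNReal.ofReal (f x) ^ 2 := by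
  calc ENNReal.ofReal (f x₀) = ∫⁻ y, ENNReal.ofReal (f x₀) * ENNReal.ofReal (f y) := by
        rw [lintegral_const_mul' _ _ ENNReal.ofReal_ne_top, hf1, mul_one]
    _ ≤ ∫⁻ y, ENNReal.ofReal (f ((2 : ℝ)⁻¹ • x₀ + (2 : ℝ)⁻¹ • y)) ^ 2 := by
        refine lintegral_mono fun y => ?_
        rw [← ENNReal.ofReal_mul (hf.1 x₀), ← ENNReal.ofReal_pow (hf.1 _)]
        exact ENNReal.ofReal_le_ofReal (hf.mul_le_sq_midpoint x₀ y)
    _ = 2 ^ n * ∫⁻ x, ENNReal.ofReal (f x) ^ 2 := by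
        rw [lintegral_comp_add_half_smul volume (fun x => ENNReal.ofReal (f x) ^ 2),
          finrank_euclideanSpace_fin]

end LogConcaveDensity

/-- For a log-concave probability density (Lemma 8.1): 2^(-n)·‖f‖ ≤ ∫ f² ≤ ‖f‖. -/
theorem statement19 (n : ℕ) (f : EuclideanSpace ℝ (Fin n) → ℝ)
    (hf : LogConcaveDensity f) (hint : ∫ x, f x = 1) :
    (2 : ℝ) ^ (-(n : ℝ)) * densSup f ≤ ∫ x, (f x) ^ 2 ∧
      ∫ x, (f x) ^ 2 ≤ densSup f := by
  have hfi : Integrable f := Integrable.of_integral_ne_zero (hint ▸ one_ne_zero)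
  set F : EuclideanSpace ℝ (Fin n) → ℝ≥0∞ := fun x => ENNReal.ofReal (f x)
  set L := ∫⁻ x, F x ^ 2
  have hF1 : ∫⁻ x, F x = 1 := by
    rw [← ofReal_integral_eq_lintegral_ofReal hfi (.of_forall hf.1), hint, ENNReal.ofReal_one]
  have hL : ∫ x, f x ^ 2 = L.toReal := by
    rw [integral_eq_lintegral_of_nonneg_ae (.of_forall fun x => sq_nonneg _)
      (hfi.aestronglyMeasurable.pow 2)]
    exact congrArg _ (lintegral_congr fun x => ENNReal.ofReal_pow (hf.1 x) 2)
  have hlower : essSup F volume ≤ 2 ^ n * L :=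
    essSup_le_of_ae_le _ (.of_forall (hf.ofReal_le_two_pow_mul_lintegral_sq hF1))
  have hupper : L ≤ essSup F volume := by
    simpa only [hF1, mul_one] using
      lintegral_sq_le_essSup_mul_lintegral (F := F) hfi.aemeasurable.ennreal_ofReal
  -- `∫ f²` and `‖f‖` are infinite together, and then both sides of each bound are the junk `0`.
  have htop : 2 ^ n * L = ⊤ → L = ⊤ := by simp [ENNReal.mul_eq_top]
  change _ * (essSup F volume).toReal ≤ _ ∧ _ ≤ (essSup F volume).toReal
  rw [hL, Real.rpow_neg zero_le_two, Real.rpow_natCast, inv_mul_le_iff₀ (by positivity)]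
  constructor
  · calc (essSup F volume).toReal ≤ (2 ^ n * L).toReal :=
          ENNReal.toReal_mono' hlower fun h => top_le_iff.1 (htop h ▸ hupper)
      _ = 2 ^ n * L.toReal := by simp
  · exact ENNReal.toReal_mono' hupper fun h => htop (top_le_iff.1 (h ▸ hlower))
end
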